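/- arXiv:1005.0882 — 6 statements merged into one kernel-verified Lean document; each statement's English description precedes it below -/
import Mathlib

section
/- With the above data, suppose properties (P1), (P2), (P4) and (P6) hold. Then for any U ∈ A(T) and V ∈ Irr(R) with U →*_R V, one has V ∈ A(T) and ρ(U) →*_{R_T} ρ(V). -/
/-- A rewriting system: every rule has nonempty left- and right-hand sides. -/
def IsRWS {α : Type*} (R : Set (List α × List α)) : Prop :=
  ∀ r ∈ R, r.1 ≠ [] ∧ r.2 ≠ []

/-- One-step reduction `W₁ →_R W₂`. -/
def Step {α : Type*} (R : Set (List α × List α)) (W₁ W₂ : List α) : Prop :=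
  ∃ Z₁ Z₂ X Y, (X, Y) ∈ R ∧ W₁ = Z₁ ++ X ++ Z₂ ∧ W₂ = Z₁ ++ Y ++ Z₂

/-- `→*_R`: the reflexive-transitive closure of one-step reduction. -/
def Steps {α : Type*} (R : Set (List α × List α)) : List α → List α → Prop :=
  Relation.ReflTransGen (Step R)

/-- Noetherian: no infinite reduction sequence. -/
def Noetherian {α : Type*} (R : Set (List α × List α)) : Prop :=
  ¬ ∃ g : ℕ → List α, ∀ i, Step R (g i) (g (i + 1))

/-- Confluence. -/
def Confluent {α : Type*} (R : Set (List α × List α)) : Prop :=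
  ∀ U V W, Steps R U V → Steps R U W → ∃ X, Steps R V X ∧ Steps R W X

/-- Complete rewriting system: Noetherian and confluent. -/
def CompleteRWS {α : Type*} (R : Set (List α × List α)) : Prop :=
  Noetherian R ∧ Confluent R

/-- `Irr R W`: `W ∈ A⁺` has no factor which is the left-hand side of a rule. -/
def Irr {α : Type*} (R : Set (List α × List α)) (W : List α) : Prop :=
  W ≠ [] ∧ ¬ ∃ Z₁ X Z₂, (∃ Y, (X, Y) ∈ R) ∧ W = Z₁ ++ X ++ Z₂

/-- `Presents R f`: the map sending a nonempty word `u` over `α` to `f u` exhibits the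
semigroup `S` as the semigroup presented by `[α; R]`, i.e. the semigroup `A⁺/↔*_R`:
`f` restricted to nonempty words is a surjective semigroup homomorphism whose kernel
is the congruence `↔*_R` generated by `R` (the value of `f` on the empty word is irrelevant). -/
def Presents {α S : Type*} [Semigroup S] (R : Set (List α × List α)) (f : List α → S) : Prop :=
  (∀ u v : List α, u ≠ [] → v ≠ [] → f (u ++ v) = f u * f v) ∧
  (∀ x : S, ∃ u : List α, u ≠ [] ∧ f u = x) ∧
  (∀ u v : List α, u ≠ [] → v ≠ [] → (f u = f v ↔ Relation.EqvGen (Step R) u v))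

/-- `S` has a finite complete rewriting system. -/
def HasFCRS (S : Type*) [Semigroup S] : Prop :=
  ∃ (α : Type) (R : Set (List α × List α)) (f : List α → S),
    Finite α ∧ R.Finite ∧ IsRWS R ∧ CompleteRWS R ∧ Presents R f


private lemma noeth_wf {α : Type*} {R : Set (List α × List α)} (h : Noetherian R) :
    WellFounded (flip (Step R)) := by
  by_contra hwf
  apply h
  have hex : ∃ a, ¬ Acc (flip (Step R)) a := by
    by_contra h'; push_neg at h'; exact hwf ⟨h'⟩
  obtain ⟨a, ha⟩ := hex
  have key : ∀ x, ¬ Acc (flip (Step R)) x →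
      ∃ y, Step R x y ∧ ¬ Acc (flip (Step R)) y := by
    intro x hx
    by_contra h'; push_neg at h'
    exact hx (Acc.intro x fun y hy => h' y hy)
  let F : {x // ¬ Acc (flip (Step R)) x} → {x // ¬ Acc (flip (Step R)) x} :=
    fun p => ⟨(key p.1 p.2).choose, (key p.1 p.2).choose_spec.2⟩
  refine ⟨fun n => (F^[n] ⟨a, ha⟩).1, fun i => ?_⟩
  show Step R (F^[i] ⟨a, ha⟩).1 (F^[i+1] ⟨a, ha⟩).1
  rw [Function.iterate_succ_apply']
  exact (key (F^[i] ⟨a, ha⟩).1 (F^[i] ⟨a, ha⟩).2).choose_spec.1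

private lemma irr_steps_eq {α : Type*} {R : Set (List α × List α)} {V X : List α}
    (hV : Irr R V) (h : Steps R V X) : V = X := by
  induction h using Relation.ReflTransGen.head_induction_on with
  | refl => rfl
  | head step _ _ =>
    rcases step with ⟨Z₁, Z₂, Xl, Y, hmem, hW, _⟩
    exact absurd ⟨Z₁, Xl, Z₂, ⟨Y, hmem⟩, hW⟩ hV.2

/-- **Lemma 2.1.** In the setting of a 5-tuple `(B, R_T, A(T), φ, ρ)`, if properties
(P1), (P2), (P4) and (P6) hold, then for any `U ∈ A(T)` and irreducible `V` with
`U →*_R V`, one has `V ∈ A(T)` and `ρ(U) →*_{R_T} ρ(V)`. -/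
theorem lemma_2_1 {α β S : Type*} [Semigroup S]
    -- `[α; R]` is a finitely presented semigroup presentation for `S`, `R` complete
    (R : Set (List α × List α)) (hαfin : Finite α) (hRfin : R.Finite)
    (hRWS : IsRWS R) (hcomp : CompleteRWS R)
    (f : List α → S) (hpres : Presents R f)
    -- `T` is a subsemigroup of `S`
    (T : Subsemigroup S)
    -- `A(T)` with `{W ∈ Irr(R) : [W]_R ∈ T} ⊆ A(T) ⊆ {W ∈ A⁺ : [W]_R ∈ T}`
    (AT : Set (List α))
    (hAT₁ : ∀ W : List α, Irr R W → f W ∈ T → W ∈ AT)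
    (hAT₂ : ∀ W ∈ AT, W ≠ [] ∧ f W ∈ T)
    -- `B` nonempty, `R_T` a rewriting system over `B`
    (_ : Nonempty β) (RT : Set (List β × List β)) (hRT : IsRWS RT)
    -- `φ : B⁺ → A⁺` a homomorphism with `[φ(U')]_R ∈ T` for all `U' ∈ B⁺`
    (φ : List β → List α)
    (hφmul : ∀ u v : List β, φ (u ++ v) = φ u ++ φ v)
    (hφne : ∀ u : List β, u ≠ [] → φ u ≠ [])
    (hφT : ∀ u : List β, u ≠ [] → f (φ u) ∈ T)
    -- `ρ : A(T) → B⁺`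
    (ρ : List α → List β)
    (hρne : ∀ U ∈ AT, ρ U ≠ [])
    -- (P1)
    (P1 : ∀ U ∈ AT, ∀ V₁ : List α, Step R U V₁ →
      ∃ U' : List β, U' ≠ [] ∧ Steps R V₁ (φ U') ∧ Step RT (ρ U) U')
    -- (P2)
    (P2 : ∀ U' V' : List β, U' ≠ [] → Steps RT U' V' → Steps R (φ U') (φ V'))
    -- (P4)
    (P4 : ∀ U' : List β, U' ≠ [] → ∃ U'' : List β, U'' ≠ [] ∧ φ U'' ∈ AT ∧ Steps RT U' U'')
    -- (P6)
    (P6 : ∀ U' : List β, U' ≠ [] → φ U' ∈ AT → Steps RT U' (ρ (φ U'))) :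
    ∀ U ∈ AT, ∀ V : List α, Irr R V → Steps R U V → V ∈ AT ∧ Steps RT (ρ U) (ρ V) := by
  have hwf : WellFounded (Relation.TransGen (flip (Step R))) :=
    (noeth_wf hcomp.1).transGen
  intro U hU
  induction U using hwf.induction with
  | _ U IH =>
  intro V hVirr hUV
  rcases Relation.ReflTransGen.cases_head hUV with rfl | ⟨V₁, hstep, hV₁V⟩
  · exact ⟨hU, Relation.ReflTransGen.refl⟩
  obtain ⟨U', hU'ne, hV₁φU', hρstep⟩ := P1 U hU V₁ hstep
  obtain ⟨U'', hU''ne, hφU''AT, hU'U''⟩ := P4 U' hU'ne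
  have hφsteps : Steps R (φ U') (φ U'') := P2 U' U'' hU'ne hU'U''
  -- V₁ →* V : by confluence of U → V₁, U →* V, V irreducible
  have hV₁V' : Steps R V₁ V := hV₁V
  -- φ U'' →* V by confluence
  have hV₁φU'' : Steps R V₁ (φ U'') := hV₁φU'.trans hφsteps
  obtain ⟨X, hVX, hφX⟩ := hcomp.2 V₁ V (φ U'') hV₁V' hV₁φU''
  have hVX' : V = X := irr_steps_eq hVirr hVX
  have hφV : Steps R (φ U'') V := hVX' ▸ hφX
  -- φ U'' is a strict descendant of U
  have hdesc : Relation.TransGen (flip (Step R)) (φ U'') U := by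
    have h1 : Steps R V₁ (φ U'') := hV₁φU''
    have h2 : Relation.ReflTransGen (flip (Step R)) (φ U'') V₁ :=
      Relation.reflTransGen_swap.mpr h1
    exact Relation.TransGen.tail' h2 hstep
  obtain ⟨hVAT, hρsteps⟩ := IH (φ U'') hdesc hφU''AT V hVirr hφV
  refine ⟨hVAT, ?_⟩
  have h6 : Steps RT U'' (ρ (φ U'')) := P6 U'' hU''ne hφU''AT
  exact (Relation.ReflTransGen.head hρstep (hU'U''.trans h6)).trans hρsteps
end

section
/- If the 5-tuple (B, R_T, A(T), φ, ρ) has Property 𝓡 relative to [A;R], then [B;R_T] is a semigroup presentation for T — that is, the map ψ defined by ψ([U']_{R_T}) = [φ(U')]_R is a well-defined semigroup isomorphism of B⁺/↔*_{R_T} onto T — and R_T is a complete rewriting system. -/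
section Helpers
variable {γ : Type*} {r : Set (List γ × List γ)}

lemma step_ne' (h : IsRWS r) {u v : List γ} (s : Step r u v) : u ≠ [] ∧ v ≠ [] := by
  obtain ⟨Z₁, Z₂, X, Y, hr, hu, hv⟩ := s
  obtain ⟨hX, hY⟩ := h _ hr
  subst hu hv
  constructor <;> simp [hX, hY]

lemma steps_ne' (h : IsRWS r) {u v : List γ} (s : Steps r u v) (hu : u ≠ []) : v ≠ [] := by
  induction s with
  | refl => exact hu
  | tail _ h2 _ => exact (step_ne' h h2).2

lemma steps_nf {v x : List γ} (hnf : ∀ y, ¬ Step r v y) (s : Steps r v x) : x = v := by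
  rcases Relation.ReflTransGen.cases_head s with h | ⟨c, hc, _⟩
  · exact h.symm
  · exact absurd hc (hnf c)

lemma noDesc {X : Type*} {q : X → X → Prop} (wf : WellFounded q) (g : ℕ → X)
    (hg : ∀ i, q (g (i+1)) (g i)) : False := by
  have H : ∀ x, Acc q x → ∀ g : ℕ → X, g 0 = x → (∀ i, q (g (i+1)) (g i)) → False := by
    intro x hx
    induction hx with
    | intro y _ ih =>
      intro g h0 hg
      exact ih (g 1) (h0 ▸ hg 0) (fun i => g (i+1)) rfl (fun i => hg (i+1))
  exact H (g 0) (wf.apply (g 0)) g rfl hg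

lemma wf_of_noChain {X : Type*} {q : X → X → Prop}
    (h : ¬ ∃ g : ℕ → X, ∀ i, q (g i) (g (i+1))) :
    WellFounded (fun a b => q b a) := by
  by_contra hwf
  obtain ⟨a, ha⟩ : ∃ a, ¬ Acc (fun a b => q b a) a := by
    by_contra h2
    push_neg at h2
    exact hwf ⟨h2⟩
  have next : ∀ x, ¬ Acc (fun a b => q b a) x →
      ∃ y, q x y ∧ ¬ Acc (fun a b => q b a) y := by
    intro x hx
    by_contra h2
    push_neg at h2
    exact hx (Acc.intro x fun y hy => h2 y hy)
  let g : ℕ → {x // ¬ Acc (fun a b => q b a) x} := fun n =>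
    Nat.rec ⟨a, ha⟩ (fun _ p => ⟨(next p.1 p.2).choose, (next p.1 p.2).choose_spec.2⟩) n
  exact h ⟨fun i => (g i).1, fun i => (next (g i).1 (g i).2).choose_spec.1⟩

lemma exists_nf' (wf : WellFounded (fun a b : List γ => Step r b a)) (W : List γ) :
    ∃ V, Steps r W V ∧ ∀ y, ¬ Step r V y := by
  refine wf.induction (C := fun W => ∃ V, Steps r W V ∧ ∀ y, ¬ Step r V y) W ?_
  intro x ih
  by_cases hx : ∀ y, ¬ Step r x y
  · exact ⟨x, .refl, hx⟩
  · push_neg at hx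
    obtain ⟨y, hy⟩ := hx
    obtain ⟨V, h1, h2⟩ := ih y hy
    exact ⟨V, .head hy h1, h2⟩

lemma steps_eqvGen {u v : List γ} (h : Steps r u v) : Relation.EqvGen (Step r) u v := by
  induction h with
  | refl => exact .refl u
  | tail _ h2 ih => exact .trans _ _ _ ih (.rel _ _ h2)

lemma church_rosser (hc : Confluent r) {u v : List γ} (h : Relation.EqvGen (Step r) u v) :
    ∃ c, Steps r u c ∧ Steps r v c := by
  induction h with
  | rel a b hab => exact ⟨b, .single hab, .refl⟩
  | refl a => exact ⟨a, .refl, .refl⟩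
  | symm a b _ ih => obtain ⟨c, h1, h2⟩ := ih; exact ⟨c, h2, h1⟩
  | trans a b c _ _ ih1 ih2 =>
    obtain ⟨d, h1, h2⟩ := ih1
    obtain ⟨e, h3, h4⟩ := ih2
    obtain ⟨x, h5, h6⟩ := hc b d e h2 h3
    exact ⟨x, h1.trans h5, h4.trans h6⟩

end Helpers

/-- **Theorem 2.2.** If the 5-tuple `(B, R_T, A(T), φ, ρ)` has Property 𝓡 relative to
`[α; R]` (i.e. (P1)–(P6) all hold), then `[B; R_T]` is a semigroup presentation for `T`
— the map `ψ([U']_{R_T}) = [φ(U')]_R` is a well-defined isomorphism of `B⁺/↔*_{R_T}`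
onto `T` — and `R_T` is a complete rewriting system. -/
theorem theorem_2_2 {α β S : Type*} [Semigroup S]
    -- `[α; R]` is a finitely presented semigroup presentation for `S`, `R` complete
    (R : Set (List α × List α)) (hαfin : Finite α) (hRfin : R.Finite)
    (hRWS : IsRWS R) (hcomp : CompleteRWS R)
    (f : List α → S) (hpres : Presents R f)
    -- `T` is a subsemigroup of `S`
    (T : Subsemigroup S)
    -- `A(T)` with `{W ∈ Irr(R) : [W]_R ∈ T} ⊆ A(T) ⊆ {W ∈ A⁺ : [W]_R ∈ T}`
    (AT : Set (List α))
    (hAT₁ : ∀ W : List α, Irr R W → f W ∈ T → W ∈ AT)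
    (hAT₂ : ∀ W ∈ AT, W ≠ [] ∧ f W ∈ T)
    -- `B` nonempty, `R_T` a rewriting system over `B`
    (_ : Nonempty β) (RT : Set (List β × List β)) (hRT : IsRWS RT)
    -- `φ : B⁺ → A⁺` a homomorphism with `[φ(U')]_R ∈ T` for all `U' ∈ B⁺`
    (φ : List β → List α)
    (hφmul : ∀ u v : List β, φ (u ++ v) = φ u ++ φ v)
    (hφne : ∀ u : List β, u ≠ [] → φ u ≠ [])
    (hφT : ∀ u : List β, u ≠ [] → f (φ u) ∈ T)
    -- `ρ : A(T) → B⁺`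
    (ρ : List α → List β)
    (hρne : ∀ U ∈ AT, ρ U ≠ [])
    -- (P1)
    (P1 : ∀ U ∈ AT, ∀ V₁ : List α, Step R U V₁ →
      ∃ U' : List β, U' ≠ [] ∧ Steps R V₁ (φ U') ∧ Step RT (ρ U) U')
    -- (P2)
    (P2 : ∀ U' V' : List β, U' ≠ [] → Steps RT U' V' → Steps R (φ U') (φ V'))
    -- (P3)
    (P3 : ¬ ∃ g : ℕ → List β, (∀ i, g i ≠ []) ∧ (∀ i, Step RT (g i) (g (i + 1))) ∧
      (∀ i, φ (g (i + 1)) = φ (g i)))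
    -- (P4)
    (P4 : ∀ U' : List β, U' ≠ [] → ∃ U'' : List β, U'' ≠ [] ∧ φ U'' ∈ AT ∧ Steps RT U' U'')
    -- (P5)
    (P5 : ∀ U ∈ AT, φ (ρ U) = U)
    -- (P6)
    (P6 : ∀ U' : List β, U' ≠ [] → φ U' ∈ AT → Steps RT U' (ρ (φ U'))) :
    (∃ ψ : List β → T, (∀ U' : List β, U' ≠ [] → (ψ U' : S) = f (φ U')) ∧ Presents RT ψ) ∧
      CompleteRWS RT := by

  classical
  obtain ⟨hmulS, hsurjS, hkerS⟩ := hpres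
  have invR_wf : WellFounded (fun a b : List α => Step R b a) := wf_of_noChain hcomp.1
  have tg_wf : WellFounded (fun a b : List α => Relation.TransGen (Step R) b a) :=
    Subrelation.wf (fun {a b} h => Relation.transGen_swap.mpr h) invR_wf.transGen
  have fstep : ∀ u v : List α, Step R u v → f u = f v := by
    intro u v h
    exact (hkerS u v (step_ne' hRWS h).1 (step_ne' hRWS h).2).2 (Relation.EqvGen.rel _ _ h)
  have fsteps : ∀ u v : List α, Steps R u v → f u = f v := by
    intro u v h
    induction h with
    | refl => rfl
    | tail _ h2 ih => exact ih.trans (fstep _ _ h2)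
  have irr_of_nf : ∀ V : List α, V ≠ [] → (∀ y, ¬ Step R V y) → Irr R V := by
    intro V hVne hnf
    refine ⟨hVne, ?_⟩
    rintro ⟨Z₁, X, Z₂, ⟨Y, hXY⟩, hdec⟩
    exact hnf (Z₁ ++ Y ++ Z₂) ⟨Z₁, Z₂, X, Y, hXY, hdec, rfl⟩
  -- Key lemma: for `U ∈ AT` reducing to a normal form `V`, `ρ U →*_{R_T} ρ V`.
  have keyA : ∀ U : List α, U ∈ AT → ∀ V, Steps R U V → (∀ y, ¬ Step R V y) →
      Steps RT (ρ U) (ρ V) := by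
    intro U
    refine tg_wf.induction
      (C := fun U => U ∈ AT → ∀ V, Steps R U V → (∀ y, ¬ Step R V y) → Steps RT (ρ U) (ρ V))
      U ?_
    intro U ih hU V hUV hVnf
    rcases Relation.ReflTransGen.cases_head hUV with h | ⟨U₁, hstep, hrest⟩
    · subst h; exact .refl
    · obtain ⟨U', hU'ne, hV₁, hρ⟩ := P1 U hU U₁ hstep
      obtain ⟨U'', hU''ne, hU''AT, hU'U''⟩ := P4 U' hU'ne
      have h2 : Steps R U₁ (φ U'') := hV₁.trans (P2 U' U'' hU'ne hU'U'')
      have h3 : Steps R (φ U'') V := by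
        obtain ⟨X, h4, h5⟩ := hcomp.2 U₁ V (φ U'') hrest h2
        rwa [steps_nf hVnf h4] at h5
      have htg : Relation.TransGen (Step R) U (φ U'') := Relation.TransGen.head' hstep h2
      have ihres := ih (φ U'') htg hU''AT V h3 hVnf
      exact Relation.ReflTransGen.head hρ
        (hU'U''.trans ((P6 U'' hU''ne hU''AT).trans ihres))
  obtain ⟨b⟩ := ‹Nonempty β›
  have hbne : ([b] : List β) ≠ [] := by simp
  set ψ : List β → T := fun u =>
    if h : u = [] then ⟨f (φ [b]), hφT [b] hbne⟩ else ⟨f (φ u), hφT u h⟩ with hψdef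
  have hψcoe : ∀ u : List β, u ≠ [] → (ψ u : S) = f (φ u) := by
    intro u hu
    simp only [hψdef]
    rw [dif_neg hu]
  have fRT : ∀ u v : List β, Relation.EqvGen (Step RT) u v → f (φ u) = f (φ v) := by
    intro u v h
    induction h with
    | rel a b hab =>
      exact fsteps _ _ (P2 a b (step_ne' hRT hab).1 (Relation.ReflTransGen.single hab))
    | refl a => rfl
    | symm a b _ ih => exact ih.symm
    | trans a b c _ _ ih1 ih2 => exact ih1.trans ih2
  have hmulψ : ∀ u v : List β, u ≠ [] → v ≠ [] → ψ (u ++ v) = ψ u * ψ v := by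
    intro u v hu hv
    have huv : u ++ v ≠ [] := fun h => hu (List.append_eq_nil_iff.mp h).1
    apply Subtype.ext
    have hco : (↑(ψ u * ψ v) : S) = (ψ u : S) * (ψ v : S) := rfl
    rw [hψcoe _ huv, hco, hψcoe _ hu, hψcoe _ hv, hφmul]
    exact hmulS _ _ (hφne u hu) (hφne v hv)
  have hsurjψ : ∀ x : T, ∃ u : List β, u ≠ [] ∧ ψ u = x := by
    intro x
    obtain ⟨W, hWne, hWval⟩ := hsurjS (x : S)
    obtain ⟨V, hWV, hVnf⟩ := exists_nf' invR_wf W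
    have hVne : V ≠ [] := steps_ne' hRWS hWV hWne
    have hfV : f V = (x : S) := (fsteps _ _ hWV).symm.trans hWval
    have hVT : f V ∈ T := hfV ▸ x.2
    have hVAT : V ∈ AT := hAT₁ V (irr_of_nf V hVne hVnf) hVT
    refine ⟨ρ V, hρne V hVAT, Subtype.ext ?_⟩
    rw [hψcoe _ (hρne V hVAT), P5 V hVAT, hfV]
  have hkerψ : ∀ u v : List β, u ≠ [] → v ≠ [] →
      (ψ u = ψ v ↔ Relation.EqvGen (Step RT) u v) := by
    intro u v hu hv
    constructor
    · intro h
      have hfuv : f (φ u) = f (φ v) := by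
        have hval := congrArg Subtype.val h
        rwa [hψcoe _ hu, hψcoe _ hv] at hval
      obtain ⟨u'', hu''ne, hu''AT, huu''⟩ := P4 u hu
      obtain ⟨v'', hv''ne, hv''AT, hvv''⟩ := P4 v hv
      have hfu : f (φ u) = f (φ u'') := fsteps _ _ (P2 u u'' hu huu'')
      have hfv : f (φ v) = f (φ v'') := fsteps _ _ (P2 v v'' hv hvv'')
      obtain ⟨N, hN1, hNnf⟩ := exists_nf' invR_wf (φ u'')
      have hNne : N ≠ [] := steps_ne' hRWS hN1 (hφne _ hu''ne)
      have hfN : f (φ v'') = f N := by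
        rw [← hfv, ← hfuv, hfu]
        exact fsteps _ _ hN1
      have hv''N : Steps R (φ v'') N := by
        have heq : Relation.EqvGen (Step R) (φ v'') N :=
          (hkerS _ _ (hφne _ hv''ne) hNne).1 hfN
        obtain ⟨c, h1, h2⟩ := church_rosser hcomp.2 heq
        rwa [steps_nf hNnf h2] at h1
      have hNT : f N ∈ T := by
        rw [← fsteps _ _ hN1]
        exact (hAT₂ _ hu''AT).2
      have hNAT : N ∈ AT := hAT₁ N (irr_of_nf N hNne hNnf) hNT
      have c1 : Steps RT u (ρ N) :=
        huu''.trans ((P6 u'' hu''ne hu''AT).trans (keyA _ hu''AT N hN1 hNnf))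
      have c2 : Steps RT v (ρ N) :=
        hvv''.trans ((P6 v'' hv''ne hv''AT).trans (keyA _ hv''AT N hv''N hNnf))
      exact Relation.EqvGen.trans _ _ _ (steps_eqvGen c1)
        (Relation.EqvGen.symm _ _ (steps_eqvGen c2))
    · intro h
      apply Subtype.ext
      rw [hψcoe _ hu, hψcoe _ hv]
      exact fRT u v h
  have hNoethRT : Noetherian RT := by
    rintro ⟨g, hg⟩
    have gne : ∀ i, g i ≠ [] := fun i => (step_ne' hRT (hg i)).1
    have hF : ∀ i, Steps R (φ (g i)) (φ (g (i+1))) :=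
      fun i => P2 _ _ (gne i) (Relation.ReflTransGen.single (hg i))
    by_cases hc : ∃ N, ∀ i, φ (g (N + i + 1)) = φ (g (N + i))
    · obtain ⟨N, hcN⟩ := hc
      exact P3 ⟨fun i => g (N + i), fun i => gne _, fun i => hg _, fun i => hcN i⟩
    · push_neg at hc
      have hrange : ∀ a k, Steps R (φ (g a)) (φ (g (a + k))) := by
        intro a k
        induction k with
        | zero => exact .refl
        | succ n ih => exact ih.trans (hF (a + n))
      obtain ⟨h, h0, hsucc⟩ : ∃ h : ℕ → ℕ, h 0 = 0 ∧
          ∀ k, h (k+1) = h k + (hc (h k)).choose + 1 :=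
        ⟨fun k => Nat.rec 0 (fun n hn => hn + (hc hn).choose + 1) k, rfl, fun k => rfl⟩
      have hstep : ∀ k, Relation.TransGen (Step R) (φ (g (h k))) (φ (g (h (k+1)))) := by
        intro k
        have hik := (hc (h k)).choose_spec
        have h1 : Steps R (φ (g (h k))) (φ (g (h k + (hc (h k)).choose))) := hrange _ _
        have h2 : Relation.TransGen (Step R) (φ (g (h k + (hc (h k)).choose)))
            (φ (g (h k + (hc (h k)).choose + 1))) := by
          rcases Relation.ReflTransGen.cases_head (hF (h k + (hc (h k)).choose)) with he | ⟨c, hc1, hc2⟩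
          · exact absurd he.symm hik
          · exact Relation.TransGen.head' hc1 hc2
        rw [hsucc k]
        exact Relation.TransGen.trans_right h1 h2
      exact noDesc tg_wf (fun k => φ (g (h k))) (fun k => hstep k)
  have hConfRT : Confluent RT := by
    intro U' V' W' hUV hUW
    by_cases hU : U' = []
    · subst hU
      have hnil : ∀ x : List β, Steps RT [] x → x = [] := by
        intro x hx
        rcases Relation.ReflTransGen.cases_head hx with he | ⟨c, hc1, _⟩
        · exact he.symm
        · exact absurd rfl (step_ne' hRT hc1).1
      rw [hnil _ hUV, hnil _ hUW]
      exact ⟨[], .refl, .refl⟩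
    · have hVne : V' ≠ [] := steps_ne' hRT hUV hU
      have hWne : W' ≠ [] := steps_ne' hRT hUW hU
      obtain ⟨V'', hV''ne, hV''AT, hVV''⟩ := P4 V' hVne
      obtain ⟨W'', hW''ne, hW''AT, hWW''⟩ := P4 W' hWne
      obtain ⟨N, hN1, hNnf⟩ := exists_nf' invR_wf (φ V'')
      have hNne : N ≠ [] := steps_ne' hRWS hN1 (hφne _ hV''ne)
      have hUV2 : Steps R (φ U') (φ V'') := P2 _ _ hU (hUV.trans hVV'')
      have hUW2 : Steps R (φ U') (φ W'') := P2 _ _ hU (hUW.trans hWW'')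
      have hW''N : Steps R (φ W'') N := by
        obtain ⟨X, h1, h2⟩ := hcomp.2 (φ U') (φ W'') N hUW2 (hUV2.trans hN1)
        rwa [steps_nf hNnf h2] at h1
      have hNT : f N ∈ T := by
        rw [← fsteps _ _ hN1]
        exact (hAT₂ _ hV''AT).2
      have hNAT : N ∈ AT := hAT₁ N (irr_of_nf N hNne hNnf) hNT
      refine ⟨ρ N, ?_, ?_⟩
      · exact hVV''.trans ((P6 V'' hV''ne hV''AT).trans (keyA _ hV''AT N hN1 hNnf))
      · exact hWW''.trans ((P6 W'' hW''ne hW''AT).trans (keyA _ hW''AT N hW''N hNnf))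
  exact ⟨⟨ψ, hψcoe, hmulψ, hsurjψ, hkerψ⟩, hNoethRT, hConfRT⟩
end

section
/- Let X₁, X₂, X₃ ∈ A⁺. If ρ(X₁X₂X₃) = ρ(X₁X₂)ρ(X₃) (concatenation in B*), then ρ(X₂X₃) = ρ(X₂)ρ(X₃). -/
/-! ### The construction of Section 3: adjoining a letter `s` with `φ(s) = W₀`.
The alphabet `B = A ∪ {s}` is modelled as `α ⊕ Unit`, with `Sum.inl a` the letter
`a ∈ A` and `Sum.inr ()` the new letter `s`. -/

/-- The homomorphism `φ : B* → A*` with `φ(a) = a` for `a ∈ A` and `φ(s) = W₀`. -/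
def phiS {α : Type*} (W₀ : List α) (l : List (α ⊕ Unit)) : List α :=
  l.flatMap (Sum.elim (fun a => [a]) (fun _ => W₀))

open scoped Classical in
/-- The function `ρ : A* → B*`: `ρ(ε) = ε`; if `W = X₁W₀` ends with `W₀` then
`ρ(W) = ρ(X₁)s`; otherwise `W = X₂a` with `a ∈ A` and `ρ(W) = ρ(X₂)a`. -/
noncomputable def rhoS {α : Type*} (W₀ : List α) (W : List α) : List (α ⊕ Unit) :=
  if hW : W = [] then []
  else if h : W₀ ≠ [] ∧ W₀ <:+ W then
    rhoS W₀ (W.take (W.length - W₀.length)) ++ [Sum.inr ()]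
  else
    rhoS W₀ W.dropLast ++ [Sum.inl (W.getLast hW)]
termination_by W.length
decreasing_by
  · have h1 : W₀.length ≤ W.length := h.2.length_le
    have h2 : 0 < W₀.length := List.length_pos_iff.mpr h.1
    simp only [List.length_take]
    omega
  · have h3 : 0 < W.length := List.length_pos_iff.mpr hW
    simp only [List.length_dropLast]
    omega

/-- Rules of the form (C1): `ρ(X) → ρ(Y)` for each rule `X → Y` of `R`. -/
def C1 {α : Type*} (R : Set (List α × List α)) (W₀ : List α) :
    Set (List (α ⊕ Unit) × List (α ⊕ Unit)) :=
  {p | ∃ X Y : List α, (X, Y) ∈ R ∧ p = (rhoS W₀ X, rhoS W₀ Y)}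

/-- The rule (C2): `W₀ → s`. -/
def C2 {α : Type*} (W₀ : List α) : Set (List (α ⊕ Unit) × List (α ⊕ Unit)) :=
  {p | p = (W₀.map Sum.inl, [Sum.inr ()])}

/-- Rules of the form (C3): for each rule `X₁X₂ → Y₁` of `R` with `W₀ = Z₁X₁`
(`X₁, Y₁ ∈ A⁺`, `X₂, Z₁ ∈ A*`), the rule `ρ(Z₁X₁X₂) → ρ(Y₁')` where
`Z₁X₁X₂ →*_R Y₁' ∈ Irr(R)`. -/
def C3 {α : Type*} (R : Set (List α × List α)) (W₀ : List α) :
    Set (List (α ⊕ Unit) × List (α ⊕ Unit)) :=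
  {p | ∃ X₁ X₂ Y₁ Z₁ Y₁' : List α, X₁ ≠ [] ∧ Y₁ ≠ [] ∧ (X₁ ++ X₂, Y₁) ∈ R ∧
    W₀ = Z₁ ++ X₁ ∧ Steps R (Z₁ ++ X₁ ++ X₂) Y₁' ∧ Irr R Y₁' ∧
    p = (rhoS W₀ (Z₁ ++ X₁ ++ X₂), rhoS W₀ Y₁')}

/-- Rules of the form (C4): for each rule `X₂X₁ → Y₁` of `R` with `W₀ = X₁Z₁`
(`X₁, Y₁ ∈ A⁺`, `X₂, Z₁ ∈ A*`), the rule `ρ(X₂X₁Z₁) → ρ(Y₁')` where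
`X₂X₁Z₁ →*_R Y₁' ∈ Irr(R)`. -/
def C4 {α : Type*} (R : Set (List α × List α)) (W₀ : List α) :
    Set (List (α ⊕ Unit) × List (α ⊕ Unit)) :=
  {p | ∃ X₁ X₂ Y₁ Z₁ Y₁' : List α, X₁ ≠ [] ∧ Y₁ ≠ [] ∧ (X₂ ++ X₁, Y₁) ∈ R ∧
    W₀ = X₁ ++ Z₁ ∧ Steps R (X₂ ++ X₁ ++ Z₁) Y₁' ∧ Irr R Y₁' ∧
    p = (rhoS W₀ (X₂ ++ X₁ ++ Z₁), rhoS W₀ Y₁')}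

/-- Rules of the form (C5): for each rule `X₂X₃X₄ → Y₁` of `R` with `W₀ = X₄X₅ = X₁X₂`
(`X₂, X₄, Y₁ ∈ A⁺`, `X₁, X₃, X₅ ∈ A*`), the rule `ρ(X₁X₂X₃X₄X₅) → ρ(Y₁')` where
`X₁X₂X₃X₄X₅ →*_R Y₁' ∈ Irr(R)`. -/
def C5 {α : Type*} (R : Set (List α × List α)) (W₀ : List α) :
    Set (List (α ⊕ Unit) × List (α ⊕ Unit)) :=
  {p | ∃ X₁ X₂ X₃ X₄ X₅ Y₁ Y₁' : List α, X₂ ≠ [] ∧ X₄ ≠ [] ∧ Y₁ ≠ [] ∧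
    (X₂ ++ X₃ ++ X₄, Y₁) ∈ R ∧ W₀ = X₄ ++ X₅ ∧ W₀ = X₁ ++ X₂ ∧
    Steps R (X₁ ++ X₂ ++ X₃ ++ X₄ ++ X₅) Y₁' ∧ Irr R Y₁' ∧
    p = (rhoS W₀ (X₁ ++ X₂ ++ X₃ ++ X₄ ++ X₅), rhoS W₀ Y₁')}

/-- Rules of the form (C6): `sX₃ → X₁s` whenever `W₀ = X₁X₂ = X₂X₃` with
`X₁, X₂, X₃ ∈ A⁺`. -/
def C6 {α : Type*} (W₀ : List α) : Set (List (α ⊕ Unit) × List (α ⊕ Unit)) :=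
  {p | ∃ X₁ X₂ X₃ : List α, X₁ ≠ [] ∧ X₂ ≠ [] ∧ X₃ ≠ [] ∧
    W₀ = X₁ ++ X₂ ∧ W₀ = X₂ ++ X₃ ∧
    p = (Sum.inr () :: X₃.map Sum.inl, X₁.map Sum.inl ++ [Sum.inr ()])}

/-- The rewriting system `R_S` over `B = A ∪ {s}`. -/
def RS {α : Type*} (R : Set (List α × List α)) (W₀ : List α) :
    Set (List (α ⊕ Unit) × List (α ⊕ Unit)) :=
  C1 R W₀ ∪ C2 W₀ ∪ C3 R W₀ ∪ C4 R W₀ ∪ C5 R W₀ ∪ C6 W₀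

/-!
`ρ` is computed from the right end of the word, and `ρ(UV) = ρ(U)ρ(V)` holds as long as the
right-to-left parse of `V` inside `UV` never meets an occurrence of `W₀` reaching into `U`.
When `U` is a suffix of `U'`, every such occurrence in `UV` is also one in `U'V`, so the
factorisation passes from `U'V` to `UV`.
-/

section RhoS

variable {α : Type*} {W₀ : List α}

theorem rhoS_nil : rhoS W₀ [] = [] := by
  rw [rhoS, dif_pos rfl]

theorem rhoS_append_W₀ (hW₀ : W₀ ≠ []) (X : List α) :
    rhoS W₀ (X ++ W₀) = rhoS W₀ X ++ [Sum.inr ()] := by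
  rw [rhoS, dif_neg (by simp [hW₀]), dif_pos ⟨hW₀, List.suffix_append X W₀⟩,
    List.length_append, Nat.add_sub_cancel, List.take_left]

theorem rhoS_concat_of_not_suffix {X : List α} {a : α} (h : ¬(W₀ ≠ [] ∧ W₀ <:+ X ++ [a])) :
    rhoS W₀ (X ++ [a]) = rhoS W₀ X ++ [Sum.inl a] := by
  rw [rhoS, dif_neg (by simp), dif_neg h, List.dropLast_concat, List.getLast_concat]

theorem rhoS_append_of_isSuffix {U U' : List α} (hU : U <:+ U') (V : List α)
    (h : rhoS W₀ (U' ++ V) = rhoS W₀ U' ++ rhoS W₀ V) :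
    rhoS W₀ (U ++ V) = rhoS W₀ U ++ rhoS W₀ V := by
  by_cases hV : W₀ ≠ [] ∧ W₀ <:+ V
  · obtain ⟨hW₀, V₁, rfl⟩ := hV
    simp only [← List.append_assoc, rhoS_append_W₀ hW₀] at h ⊢
    rw [rhoS_append_of_isSuffix hU V₁ (List.append_cancel_right h)]
  · obtain rfl | ⟨V₁, a, rfl⟩ := V.eq_nil_or_concat'
    · simp [rhoS_nil]
    have hV₁ : rhoS W₀ (V₁ ++ [a]) = rhoS W₀ V₁ ++ [Sum.inl a] := rhoS_concat_of_not_suffix hV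
    -- the last letter of `ρ(U'V)` is `a`, not `s`, so `U'V` does not end with `W₀`
    have hU'V : ¬(W₀ ≠ [] ∧ W₀ <:+ U' ++ V₁ ++ [a]) := by
      rintro ⟨hW₀, X, hX⟩
      rw [← List.append_assoc, ← hX, rhoS_append_W₀ hW₀, hV₁] at h
      simpa using congrArg List.getLast? h
    have hUV : ¬(W₀ ≠ [] ∧ W₀ <:+ U ++ V₁ ++ [a]) := fun ⟨hW₀, hsuf⟩ =>
      hU'V ⟨hW₀, hsuf.trans <|
        List.suffix_append_self_iff.mpr (List.suffix_append_self_iff.mpr hU)⟩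
    rw [← List.append_assoc, rhoS_concat_of_not_suffix hU'V, hV₁, ← List.append_assoc] at h
    rw [← List.append_assoc, rhoS_concat_of_not_suffix hUV, hV₁,
      rhoS_append_of_isSuffix hU V₁ (List.append_cancel_right h), List.append_assoc]
termination_by V.length
decreasing_by
  all_goals subst_vars; simp only [List.length_append, List.length_singleton]
  · have := List.length_pos_iff.mpr hW₀
    omega
  · omega

end RhoS

theorem lemma_3_1_general {α : Type*}
    (W₀ : List α)
    (X₁ X₂ X₃ : List α)
    (h : rhoS W₀ (X₁ ++ X₂ ++ X₃) = rhoS W₀ (X₁ ++ X₂) ++ rhoS W₀ X₃) :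
    rhoS W₀ (X₂ ++ X₃) = rhoS W₀ X₂ ++ rhoS W₀ X₃ :=
  rhoS_append_of_isSuffix (List.suffix_append X₁ X₂) X₃ h

/-- **Lemma 3.1.** If `ρ(X₁X₂X₃) = ρ(X₁X₂)ρ(X₃)` then `ρ(X₂X₃) = ρ(X₂)ρ(X₃)`. -/
theorem lemma_3_1 {α : Type*} (R : Set (List α × List α))
    (hαfin : Finite α) (hRfin : R.Finite) (hRWS : IsRWS R) (hcomp : CompleteRWS R)
    (W₀ : List α) (hW₀len : 1 < W₀.length) (hW₀irr : Irr R W₀)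
    (X₁ X₂ X₃ : List α) (h₁ : X₁ ≠ []) (h₂ : X₂ ≠ []) (h₃ : X₃ ≠ [])
    (h : rhoS W₀ (X₁ ++ X₂ ++ X₃) = rhoS W₀ (X₁ ++ X₂) ++ rhoS W₀ X₃) :
    rhoS W₀ (X₂ ++ X₃) = rhoS W₀ X₂ ++ rhoS W₀ X₃ :=
  lemma_3_1_general W₀ X₁ X₂ X₃ h
end

section
/- If U' →_{R_S} V' by one of the rules of the form (C1), (C3), (C4) or (C5), then φ(U') ≠ φ(V'). -/
/-! Since `φ ∘ ρ` is the identity, a rule `ρ(L) → ρ(M)` changes the image under `φ` exactly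
when `L ≠ M`. For (C1) this holds because a Noetherian system has no rule `X → X`; for
(C3)–(C5), `L` contains the left-hand side of a rule of `R` while `M` is irreducible. -/

section Phi

variable {α : Type*} (W₀ : List α)

@[simp]
theorem phiS_append (l m : List (α ⊕ Unit)) :
    phiS W₀ (l ++ m) = phiS W₀ l ++ phiS W₀ m :=
  List.flatMap_append

theorem phiS_rhoS (W : List α) : phiS W₀ (rhoS W₀ W) = W := by
  induction W using rhoS.induct W₀ with
  | case1 => rw [rhoS]; rfl
  | case2 W hW hsuf ih =>
    rw [rhoS, dif_neg hW, dif_pos hsuf, phiS_append, ih]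
    obtain ⟨T, rfl⟩ := hsuf.2
    simp [phiS]
  | case3 W hW hsuf ih =>
    rw [rhoS, dif_neg hW, dif_neg hsuf, phiS_append, ih]
    simp [phiS, List.dropLast_append_getLast]

theorem phiS_ne_of_step {R' : Set (List (α ⊕ Unit) × List (α ⊕ Unit))}
    (hR' : ∀ p ∈ R', phiS W₀ p.1 ≠ phiS W₀ p.2) {U V : List (α ⊕ Unit)} (h : Step R' U V) :
    phiS W₀ U ≠ phiS W₀ V := by
  obtain ⟨Z₁, Z₂, X, Y, hXY, rfl, rfl⟩ := h
  simpa using hR' (X, Y) hXY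

end Phi

section Rewriting

variable {α : Type*} {R : Set (List α × List α)}

theorem Noetherian.fst_ne_snd (hR : Noetherian R) {X Y : List α} (hXY : (X, Y) ∈ R) :
    X ≠ Y := by
  rintro rfl
  exact hR ⟨fun _ => X, fun _ => ⟨[], [], X, X, hXY, by simp, by simp⟩⟩

theorem Irr.append_lhs_append_ne {W X Y : List α} (hW : Irr R W) (hXY : (X, Y) ∈ R)
    (Z₁ Z₂ : List α) : Z₁ ++ X ++ Z₂ ≠ W := by
  rintro rfl
  exact hW.2 ⟨Z₁, X, Z₂, ⟨Y, hXY⟩, rfl⟩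

end Rewriting

section Rules

variable {α : Type*} {R : Set (List α × List α)} {W₀ : List α}
  {p : List (α ⊕ Unit) × List (α ⊕ Unit)}

theorem phiS_ne_of_mem_C1 (hR : Noetherian R) (hp : p ∈ C1 R W₀) :
    phiS W₀ p.1 ≠ phiS W₀ p.2 := by
  obtain ⟨X, Y, hXY, rfl⟩ := hp
  simpa only [phiS_rhoS] using hR.fst_ne_snd hXY

theorem phiS_ne_of_mem_C3 (hp : p ∈ C3 R W₀) : phiS W₀ p.1 ≠ phiS W₀ p.2 := by
  obtain ⟨X₁, X₂, Y₁, Z₁, Y₁', -, -, hR, -, -, hirr, rfl⟩ := hp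
  simpa only [phiS_rhoS, List.append_assoc, List.append_nil] using
    hirr.append_lhs_append_ne hR Z₁ []

theorem phiS_ne_of_mem_C4 (hp : p ∈ C4 R W₀) : phiS W₀ p.1 ≠ phiS W₀ p.2 := by
  obtain ⟨X₁, X₂, Y₁, Z₁, Y₁', -, -, hR, -, -, hirr, rfl⟩ := hp
  simpa only [phiS_rhoS, List.nil_append] using hirr.append_lhs_append_ne hR [] Z₁

theorem phiS_ne_of_mem_C5 (hp : p ∈ C5 R W₀) : phiS W₀ p.1 ≠ phiS W₀ p.2 := by
  obtain ⟨X₁, X₂, X₃, X₄, X₅, Y₁, Y₁', -, -, -, hR, -, -, -, hirr, rfl⟩ := hp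
  simpa only [phiS_rhoS, List.append_assoc] using hirr.append_lhs_append_ne hR X₁ X₅

end Rules

theorem lemma_3_6_general {α : Type*} (R : Set (List α × List α))
    (hcomp : CompleteRWS R)
    (W₀ : List α)
    (U' V' : List (α ⊕ Unit))
    (h : Step (C1 R W₀ ∪ C3 R W₀ ∪ C4 R W₀ ∪ C5 R W₀) U' V') :
    phiS W₀ U' ≠ phiS W₀ V' := by
  refine phiS_ne_of_step W₀ (fun p hp => ?_) h
  rcases hp with ((hp | hp) | hp) | hp
  · exact phiS_ne_of_mem_C1 hcomp.1 hp
  · exact phiS_ne_of_mem_C3 hp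
  · exact phiS_ne_of_mem_C4 hp
  · exact phiS_ne_of_mem_C5 hp

/-- **Lemma 3.6.** If `U' →_{R_S} V'` by one of the rules of the form (C1), (C3),
(C4) or (C5), then `φ(U') ≠ φ(V')`. -/
theorem lemma_3_6 {α : Type*} (R : Set (List α × List α))
    (hαfin : Finite α) (hRfin : R.Finite) (hRWS : IsRWS R) (hcomp : CompleteRWS R)
    (W₀ : List α) (hW₀len : 1 < W₀.length) (hW₀irr : Irr R W₀)
    (U' V' : List (α ⊕ Unit)) (hU' : U' ≠ [])
    (h : Step (C1 R W₀ ∪ C3 R W₀ ∪ C4 R W₀ ∪ C5 R W₀) U' V') :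
    phiS W₀ U' ≠ phiS W₀ V' :=
  lemma_3_6_general R hcomp W₀ U' V' h
end

section
/- Let X → Y ∈ R with [X]_R ∈ T. Then: (a) if W ∈ A⁺ is a factor of X with [W]_R ∈ S \ T, then W = sᵢ for some i; (b) if W ∈ A⁺ is a factor of Y with [W]_R ∈ S \ T, then W = sᵢ for some i. -/
/-! ### The construction of Section 5.
`S` is a semigroup, `T` a large subsemigroup, `[A; R]` a finitely presented semigroup
presentation for `S` with `R` complete satisfying (Q1)–(Q3), where
`S \ T = {[s₁]_R, …, [sₙ]_R}` with the `sᵢ ∈ Irr(R) ∩ A` given by `s : Fin n → α`.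
The new alphabet `B = A₁ ∪ C` is modelled inside `α ⊕ List α`: `Sum.inl a` is a letter
`a ∈ A₁` and `Sum.inr u` is the letter `c_u ∈ C`. -/

namespace Sec5

variable {α S : Type*} [Semigroup S]

/-- `A₁ = {a ∈ A : [a]_R ∈ T}`. -/
def A1 (f : List α → S) (T : Subsemigroup S) : Set α := {a | f [a] ∈ T}

/-- `A(T)(0)`: the words `W ∈ A⁺` with `[W]_R ∈ T` such that every factor `X₁` of `W`
with `[X₁]_R ∈ S \ T` satisfies `‖X₁‖ = 1` and `X₁ ∈ A_S = {s₁, …, sₙ}`. -/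
def AT0 {n : ℕ} (f : List α → S) (T : Subsemigroup S) (s : Fin n → α) : Set (List α) :=
  {W | W ≠ [] ∧ f W ∈ T ∧
    ∀ Z₁ X₁ Z₂ : List α, X₁ ≠ [] → W = Z₁ ++ X₁ ++ Z₂ → f X₁ ∉ T → ∃ i, X₁ = [s i]}

/-- `F₁ = A₁` (as one-letter words). -/
def F1 (f : List α → S) (T : Subsemigroup S) : Set (List α) :=
  {W | ∃ a : α, f [a] ∈ T ∧ W = [a]}

/-- `F₂ = {sb : s ∈ A_S, b ∈ A₁ ∪ A_S, [sb]_R ∈ T}`. -/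
def F2 {n : ℕ} (f : List α → S) (T : Subsemigroup S) (s : Fin n → α) : Set (List α) :=
  {W | ∃ (i : Fin n) (b : α), (f [b] ∈ T ∨ ∃ j, b = s j) ∧ f [s i, b] ∈ T ∧ W = [s i, b]}

/-- `F₃ = {as : a ∈ A₁, s ∈ A_S, [as]_R ∈ T}`. -/
def F3 {n : ℕ} (f : List α → S) (T : Subsemigroup S) (s : Fin n → α) : Set (List α) :=
  {W | ∃ (a : α) (i : Fin n), f [a] ∈ T ∧ f [a, s i] ∈ T ∧ W = [a, s i]}

/-- `F₄ = {sbs' : s, s' ∈ A_S, b ∈ A₁ ∪ A_S, [sb]_R, [bs']_R, [sbs']_R ∈ T}`. -/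
def F4 {n : ℕ} (f : List α → S) (T : Subsemigroup S) (s : Fin n → α) : Set (List α) :=
  {W | ∃ (i : Fin n) (b : α) (j : Fin n), (f [b] ∈ T ∨ ∃ k, b = s k) ∧
    f [s i, b] ∈ T ∧ f [b, s j] ∈ T ∧ f [s i, b, s j] ∈ T ∧ W = [s i, b, s j]}

/-- The sets `A(T)(i)` for `i ≥ 1` (with `A(T)(0)` given by `AT0`; the value at `0`
here is the empty set and is unused): `A(T)(1) = F₁ ∪ F₂ ∪ F₃ ∪ F₄` and
`A(T)(i+1) = (⋃_{a ∈ A₁} (a·A(T)(i) ∩ A(T)(0))) ∪ (⋃_{X ∈ F₂} (X·A(T)(i) ∩ A(T)(0)))`. -/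
def ATn {n : ℕ} (f : List α → S) (T : Subsemigroup S) (s : Fin n → α) : ℕ → Set (List α)
  | 0 => ∅
  | 1 => F1 f T ∪ F2 f T s ∪ F3 f T s ∪ F4 f T s
  | (i + 2) =>
      (⋃ a ∈ A1 f T, ({W | ∃ V ∈ ATn f T s (i + 1), W = a :: V} ∩ AT0 f T s)) ∪
      (⋃ X ∈ F2 f T s, ({W | ∃ V ∈ ATn f T s (i + 1), W = X ++ V} ∩ AT0 f T s))

/-- `A(T) = ⋃_{i ≥ 1} A(T)(i)`. -/
def ATset {n : ℕ} (f : List α → S) (T : Subsemigroup S) (s : Fin n → α) : Set (List α) :=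
  ⋃ i : ℕ, ATn f T s (i + 1)

/-- `A₁` viewed as a set of letters of `B`. -/
def A1' (f : List α → S) (T : Subsemigroup S) : Set (α ⊕ List α) :=
  {x | ∃ a : α, f [a] ∈ T ∧ x = Sum.inl a}

/-- `C_R = {c_{as} : [as]_R ∈ T, a ∈ A₁, s ∈ A_S}`. -/
def CR {n : ℕ} (f : List α → S) (T : Subsemigroup S) (s : Fin n → α) : Set (α ⊕ List α) :=
  {x | ∃ (a : α) (i : Fin n), f [a] ∈ T ∧ f [a, s i] ∈ T ∧ x = Sum.inr [a, s i]}

/-- `C_{L₁} = {c_{sa} : [sa]_R ∈ T, a ∈ A₁, s ∈ A_S}`. -/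
def CL1 {n : ℕ} (f : List α → S) (T : Subsemigroup S) (s : Fin n → α) : Set (α ⊕ List α) :=
  {x | ∃ (i : Fin n) (a : α), f [a] ∈ T ∧ f [s i, a] ∈ T ∧ x = Sum.inr [s i, a]}

/-- `C_{L₂} = {c_{ss'} : [ss']_R ∈ T, s, s' ∈ A_S}`. -/
def CL2 {n : ℕ} (f : List α → S) (T : Subsemigroup S) (s : Fin n → α) : Set (α ⊕ List α) :=
  {x | ∃ i j : Fin n, f [s i, s j] ∈ T ∧ x = Sum.inr [s i, s j]}

/-- `C_{M₁} = {c_{s'as} : [s'as]_R, [s'a]_R, [as]_R ∈ T, a ∈ A₁, s, s' ∈ A_S}`. -/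
def CM1 {n : ℕ} (f : List α → S) (T : Subsemigroup S) (s : Fin n → α) : Set (α ⊕ List α) :=
  {x | ∃ (i : Fin n) (a : α) (j : Fin n), f [a] ∈ T ∧
    f [s i, a, s j] ∈ T ∧ f [s i, a] ∈ T ∧ f [a, s j] ∈ T ∧ x = Sum.inr [s i, a, s j]}

/-- `C_{M₂} = {c_{ss's''} : [ss's'']_R, [ss']_R, [s's'']_R ∈ T, s, s', s'' ∈ A_S}`. -/
def CM2 {n : ℕ} (f : List α → S) (T : Subsemigroup S) (s : Fin n → α) : Set (α ⊕ List α) :=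
  {x | ∃ i j k : Fin n, f [s i, s j, s k] ∈ T ∧ f [s i, s j] ∈ T ∧ f [s j, s k] ∈ T ∧
    x = Sum.inr [s i, s j, s k]}

/-- The alphabet `B = A₁ ∪ C`, `C = C_R ∪ C_{L₁} ∪ C_{L₂} ∪ C_{M₁} ∪ C_{M₂}`,
as a set of letters of `α ⊕ List α`. -/
def BSet {n : ℕ} (f : List α → S) (T : Subsemigroup S) (s : Fin n → α) : Set (α ⊕ List α) :=
  A1' f T ∪ CR f T s ∪ CL1 f T s ∪ CL2 f T s ∪ CM1 f T s ∪ CM2 f T s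

/-- The homomorphism `φ : B⁺ → A⁺`, `φ(a) = a` for `a ∈ A₁` and `φ(c_u) = u`. -/
def phiT {α : Type*} (l : List (α ⊕ List α)) : List α :=
  l.flatMap (Sum.elim (fun a => [a]) id)

open scoped Classical in
/-- The function `ρ : A(T) → B⁺` of Section 5 (extended arbitrarily off `A(T)`):
on `A(T)(1)`, `ρ(W) = W` for `W ∈ F₁` and `ρ(W) = c_W` for `W ∈ F₂ ∪ F₃ ∪ F₄`;
for `W = aW₁ ∈ A(T)(i+1)` with `a ∈ A₁`, `ρ(W) = aρ(W₁)`; and for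
`W = sbW₁ ∈ A(T)(i+1)` with `sb ∈ F₂`, `ρ(W) = c_{sb}ρ(W₁)`. -/
noncomputable def rhoT {n : ℕ} (s : Fin n → α) : List α → List (α ⊕ List α)
  | [] => []
  | [a] => [Sum.inl a]
  | [a, b] =>
      if (∃ i, a = s i) ∨ (∃ i, b = s i) then [Sum.inr [a, b]]
      else [Sum.inl a, Sum.inl b]
  | [a, b, c] =>
      if ∃ i, a = s i then
        if ∃ i, c = s i then [Sum.inr [a, b, c]]
        else Sum.inr [a, b] :: rhoT s [c]
      else Sum.inl a :: rhoT s [b, c]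
  | a :: b :: d :: e :: rest =>
      if ∃ i, a = s i then Sum.inr [a, b] :: rhoT s (d :: e :: rest)
      else Sum.inl a :: rhoT s (b :: d :: e :: rest)

/-- `N = (max_{X ∈ Left(R)} ‖X‖) + 4`. -/
noncomputable def Nbound (R : Set (List α × List α)) : ℕ :=
  sSup {m | ∃ X Y : List α, (X, Y) ∈ R ∧ m = X.length} + 4

/-- Rules of the form (D1): `U' → ρ(Ū)` for `U' ∈ B⁺` with `‖φ(U')‖ ≤ N` and
`φ(U') ∉ Irr(R)`, where `φ(U') →*_R Ū ∈ Irr(R)`. -/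
def D1 {n : ℕ} (R : Set (List α × List α)) (f : List α → S) (T : Subsemigroup S)
    (s : Fin n → α) : Set (List (α ⊕ List α) × List (α ⊕ List α)) :=
  {p | ∃ (U' : List (α ⊕ List α)) (Ubar : List α), U' ≠ [] ∧
    (∀ x ∈ U', x ∈ BSet f T s) ∧ (phiT U').length ≤ Nbound R ∧ ¬ Irr R (phiT U') ∧
    Steps R (phiT U') Ubar ∧ Irr R Ubar ∧ p = (U', rhoT s Ubar)}

/-- Rules of the form (D2): `U' → ρ(φ(U'))` for `U' ∈ B⁺` with `‖U'‖ = 2`,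
`φ(U') ∈ A(T)` and `U' ≠ ρ(φ(U'))`. -/
def D2 {n : ℕ} (f : List α → S) (T : Subsemigroup S) (s : Fin n → α) :
    Set (List (α ⊕ List α) × List (α ⊕ List α)) :=
  {p | ∃ U' : List (α ⊕ List α), (∀ x ∈ U', x ∈ BSet f T s) ∧ U'.length = 2 ∧
    phiT U' ∈ ATset f T s ∧ U' ≠ rhoT s (phiT U') ∧ p = (U', rhoT s (phiT U'))}

/-- The rewriting system `R_T` over `B`. -/
def RT {n : ℕ} (R : Set (List α × List α)) (f : List α → S) (T : Subsemigroup S)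
    (s : Fin n → α) : Set (List (α ⊕ List α) × List (α ⊕ List α)) :=
  D1 R f T s ∪ D2 f T s

end Sec5

open Sec5

private lemma steps_irr_eq' {α : Type*} {R : Set (List α × List α)} {u w : List α}
    (hu : Irr R u) (h : Steps R u w) : w = u := by
  rcases (Relation.ReflTransGen.cases_head h) with h | ⟨c, hc, _⟩
  · exact h.symm
  · obtain ⟨Z₁, Z₂, X, Y, hXY, h1, _⟩ := hc
    exact absurd ⟨Z₁, X, Z₂, ⟨Y, hXY⟩, h1⟩ hu.2

private lemma eqv_join' {α : Type*} {R : Set (List α × List α)} (hconf : Confluent R)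
    {u v : List α} (h : Relation.EqvGen (Step R) u v) :
    ∃ w, Steps R u w ∧ Steps R v w := by
  induction h with
  | rel u v h => exact ⟨v, Relation.ReflTransGen.single h, Relation.ReflTransGen.refl⟩
  | refl u => exact ⟨u, Relation.ReflTransGen.refl, Relation.ReflTransGen.refl⟩
  | symm u v _ ih => obtain ⟨w, h1, h2⟩ := ih; exact ⟨w, h2, h1⟩
  | trans u v w _ _ ih1 ih2 =>
    obtain ⟨x, hux, hvx⟩ := ih1
    obtain ⟨y, hvy, hwy⟩ := ih2
    obtain ⟨z, hxz, hyz⟩ := hconf v x y hvx hvy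
    exact ⟨z, hux.trans hxz, hwy.trans hyz⟩

private lemma irr_factor' {α : Type*} {R : Set (List α × List α)} {u W Z₁ Z₂ : List α}
    (hu : Irr R u) (hW : W ≠ []) (h : u = Z₁ ++ W ++ Z₂) : Irr R W := by
  refine ⟨hW, fun ⟨A, X, B, hX, hWm⟩ => hu.2 ⟨Z₁ ++ A, X, B ++ Z₂, hX, ?_⟩⟩
  subst hWm; simp [h, List.append_assoc]

/-- **Lemma 5.1.** Let `X → Y ∈ R` with `[X]_R ∈ T`. (a) If `W ∈ A⁺` is a factor
of `X` with `[W]_R ∈ S \ T`, then `W = sᵢ` for some `i`; (b) likewise for factors of `Y`. -/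
theorem lemma_5_1
    {α S : Type*} [Semigroup S] (R : Set (List α × List α))
    (hαfin : Finite α) (hRfin : R.Finite) (hRWS : IsRWS R) (hcomp : CompleteRWS R)
    (f : List α → S) (hpres : Presents R f)
    (T : Subsemigroup S) {n : ℕ} (s : Fin n → α)
    -- (Q1): `S \ T = {[s₁]_R, …, [sₙ]_R}` with `s₁, …, sₙ ∈ Irr(R) ∩ A`
    (hQ1irr : ∀ i : Fin n, Irr R [s i])
    (hQ1 : (T : Set S)ᶜ = {x | ∃ i : Fin n, x = f [s i]})
    -- (Q2): right-hand sides of rules are irreducible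
    (hQ2 : ∀ X Y : List α, (X, Y) ∈ R → Irr R Y)
    -- (Q3): no left-hand side is reducible by another rule
    (hQ3 : ∀ X Y : List α, (X, Y) ∈ R → ¬ ∃ X' : List α, Step (R \ {(X, Y)}) X X')
    (X Y : List α) (hXY : (X, Y) ∈ R) (hX : f X ∈ T)
    (W : List α) (hW : W ≠ []) (hWT : f W ∉ T) :
    (∀ Z₁ Z₂ : List α, X = Z₁ ++ W ++ Z₂ → ∃ i : Fin n, W = [s i]) ∧
    (∀ Z₁ Z₂ : List α, Y = Z₁ ++ W ++ Z₂ → ∃ i : Fin n, W = [s i]) := by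
  have hicompl : f W ∈ (T : Set S)ᶜ := hWT
  rw [hQ1] at hicompl
  obtain ⟨i, hfi⟩ := hicompl
  have key : Irr R W → W = [s i] := by
    intro hWirr
    have heq := (hpres.2.2 W [s i] hW (by simp)).mp hfi
    obtain ⟨Z, h1, h2⟩ := eqv_join' hcomp.2 heq
    rw [← steps_irr_eq' hWirr h1, steps_irr_eq' (hQ1irr i) h2]
  constructor
  · intro Z₁ Z₂ hfac
    refine ⟨i, key ⟨hW, ?_⟩⟩
    rintro ⟨A, X', B, ⟨Y', hX'Y'⟩, hWeq⟩
    by_cases hne : (X', Y') = (X, Y)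
    · rw [Prod.mk.injEq] at hne
      obtain ⟨rfl, rfl⟩ := hne
      have hl := congrArg List.length hfac
      rw [hWeq] at hl
      simp [List.length_append] at hl
      have hA : A = [] := List.length_eq_zero_iff.mp (by omega)
      have hB : B = [] := List.length_eq_zero_iff.mp (by omega)
      have hWX : W = X' := by rw [hWeq, hA, hB]; simp
      exact hWT (hWX ▸ hX)
    · refine hQ3 X Y hXY ⟨(Z₁ ++ A) ++ Y' ++ (B ++ Z₂),
        Z₁ ++ A, B ++ Z₂, X', Y', ⟨hX'Y', by simpa using hne⟩, ?_, rfl⟩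
      rw [hfac, hWeq]; simp [List.append_assoc]
  · intro Z₁ Z₂ hfac
    exact ⟨i, key (irr_factor' (hQ2 X Y hXY) hW hfac)⟩
end

section
/- With the above definitions: (a) A(T) = A(T)(0); (b) A(T) contains the set {W ∈ Irr(R) : [W]_R ∈ T}; (c) if X → Y ∈ R with [X]_R ∈ T, then X ∈ A(T) and Y ∈ A(T). -/
section FactorLemmas

lemma fac1 {α : Type*} {a : α} {Z₁ X₁ Z₂ : List α} (h : Z₁ ++ X₁ ++ Z₂ = [a])
    (hne : X₁ ≠ []) : X₁ = [a] := by
  rcases Z₁ with _ | ⟨x, Z₁⟩ <;> rcases X₁ with _ | ⟨p, X₁⟩ <;> simp_all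

lemma fac2 {α : Type*} {a b : α} {Z₁ X₁ Z₂ : List α} (h : Z₁ ++ X₁ ++ Z₂ = [a, b])
    (hne : X₁ ≠ []) : X₁ = [a] ∨ X₁ = [b] ∨ X₁ = [a, b] := by
  rcases Z₁ with _ | ⟨x, _ | ⟨y, Z₁⟩⟩ <;> rcases X₁ with _ | ⟨p, _ | ⟨q, X₁⟩⟩ <;> simp_all

lemma fac3 {α : Type*} {a b c : α} {Z₁ X₁ Z₂ : List α} (h : Z₁ ++ X₁ ++ Z₂ = [a, b, c])
    (hne : X₁ ≠ []) :
    X₁ = [a] ∨ X₁ = [b] ∨ X₁ = [c] ∨ X₁ = [a, b] ∨ X₁ = [b, c] ∨ X₁ = [a, b, c] := by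
  rcases Z₁ with _ | ⟨x, _ | ⟨y, _ | ⟨z, Z₁⟩⟩⟩ <;>
    rcases X₁ with _ | ⟨p, _ | ⟨q, _ | ⟨r, X₁⟩⟩⟩ <;> simp_all

end FactorLemmas


open Sec5

/-- **Lemma 5.3.** (a) `A(T) = A(T)(0)`; (b) `A(T)` contains `{W ∈ Irr(R) : [W]_R ∈ T}`;
(c) if `X → Y ∈ R` with `[X]_R ∈ T` then `X, Y ∈ A(T)`. -/
theorem lemma_5_3
    {α S : Type*} [Semigroup S] (R : Set (List α × List α))
    (hαfin : Finite α) (hRfin : R.Finite) (hRWS : IsRWS R) (hcomp : CompleteRWS R)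
    (f : List α → S) (hpres : Presents R f)
    (T : Subsemigroup S) {n : ℕ} (s : Fin n → α)
    -- (Q1): `S \ T = {[s₁]_R, …, [sₙ]_R}` with `s₁, …, sₙ ∈ Irr(R) ∩ A`
    (hQ1irr : ∀ i : Fin n, Irr R [s i])
    (hQ1 : (T : Set S)ᶜ = {x | ∃ i : Fin n, x = f [s i]})
    -- (Q2): right-hand sides of rules are irreducible
    (hQ2 : ∀ X Y : List α, (X, Y) ∈ R → Irr R Y)
    -- (Q3): no left-hand side is reducible by another rule
    (hQ3 : ∀ X Y : List α, (X, Y) ∈ R → ¬ ∃ X' : List α, Step (R \ {(X, Y)}) X X')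
    :
    (ATset f T s = AT0 f T s) ∧
    (∀ W : List α, Irr R W → f W ∈ T → W ∈ ATset f T s) ∧
    (∀ X Y : List α, (X, Y) ∈ R → f X ∈ T → X ∈ ATset f T s ∧ Y ∈ ATset f T s) := by
  obtain ⟨hmul, hsurj, hker⟩ := hpres
  have hnotT : ∀ x : S, x ∉ T → ∃ i, x = f [s i] := fun x hx => (Set.ext_iff.mp hQ1 x).mp hx
  have hjoin : ∀ u v : List α, Relation.EqvGen (Step R) u v →
      ∃ w, Steps R u w ∧ Steps R v w := by
    intro u v h
    induction h with
    | rel u v h => exact ⟨v, Relation.ReflTransGen.single h, Relation.ReflTransGen.refl⟩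
    | refl u => exact ⟨u, Relation.ReflTransGen.refl, Relation.ReflTransGen.refl⟩
    | symm u v _ ih => obtain ⟨w, h1, h2⟩ := ih; exact ⟨w, h2, h1⟩
    | trans u v w _ _ ih1 ih2 =>
        obtain ⟨x, hux, hvx⟩ := ih1
        obtain ⟨y, hvy, hwy⟩ := ih2
        obtain ⟨z, hxz, hyz⟩ := hcomp.2 v x y hvx hvy
        exact ⟨z, hux.trans hxz, hwy.trans hyz⟩
  have hirrstep : ∀ u v : List α, Irr R u → ¬ Step R u v := by
    rintro u v ⟨-, hu⟩ ⟨Z₁, Z₂, X, Y, hr, h1, h2⟩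
    exact hu ⟨Z₁, X, Z₂, ⟨Y, hr⟩, h1⟩
  have hirrsteps : ∀ u v : List α, Irr R u → Steps R u v → u = v := by
    intro u v hu h
    rcases Relation.ReflTransGen.cases_head h with h | ⟨w, hw, -⟩
    · exact h
    · exact absurd hw (hirrstep u w hu)
  have hirruniq : ∀ u v : List α, u ≠ [] → v ≠ [] → Irr R u → Irr R v → f u = f v → u = v := by
    intro u v hu hv hiu hiv hf
    obtain ⟨w, h1, h2⟩ := hjoin u v ((hker u v hu hv).mp hf)
    rw [hirrsteps u w hiu h1, hirrsteps v w hiv h2]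
  have hirrfac : ∀ W Z₁ X₁ Z₂ : List α, Irr R W → W = Z₁ ++ X₁ ++ Z₂ → X₁ ≠ [] → Irr R X₁ := by
    rintro W Z₁ X₁ Z₂ ⟨-, hW⟩ hEq hne
    refine ⟨hne, ?_⟩
    rintro ⟨Y₁, X', Y₂, hr, hx⟩
    refine hW ⟨Z₁ ++ Y₁, X', Y₂ ++ Z₂, hr, ?_⟩
    subst hx; subst hEq; simp
  have hbcore : ∀ W : List α, Irr R W → f W ∈ T → W ∈ AT0 f T s := by
    intro W hW hfW
    refine ⟨hW.1, hfW, ?_⟩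
    intro Z₁ X₁ Z₂ hne hEq hX₁
    obtain ⟨i, hi⟩ := hnotT _ hX₁
    exact ⟨i, hirruniq X₁ [s i] hne (by simp) (hirrfac W Z₁ X₁ Z₂ hW hEq hne) (hQ1irr i) hi⟩
  -- A(T)(1) ⊆ A(T)(0)
  have hF1sub : F1 f T ⊆ AT0 f T s := by
    rintro W ⟨a, ha, rfl⟩
    refine ⟨by simp, ha, ?_⟩
    intro Z₁ X₁ Z₂ hne hEq hX₁
    rw [fac1 hEq.symm hne] at hX₁
    exact absurd ha hX₁
  have hF2sub : F2 f T s ⊆ AT0 f T s := by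
    rintro W ⟨i, b, hb, hsb, rfl⟩
    refine ⟨by simp, hsb, ?_⟩
    intro Z₁ X₁ Z₂ hne hEq hX₁
    rcases fac2 hEq.symm hne with rfl | rfl | rfl
    · exact ⟨i, rfl⟩
    · rcases hb with hb | ⟨j, rfl⟩
      · exact absurd hb hX₁
      · exact ⟨j, rfl⟩
    · exact absurd hsb hX₁
  have hF3sub : F3 f T s ⊆ AT0 f T s := by
    rintro W ⟨a, j, ha, haj, rfl⟩
    refine ⟨by simp, haj, ?_⟩
    intro Z₁ X₁ Z₂ hne hEq hX₁
    rcases fac2 hEq.symm hne with rfl | rfl | rfl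
    · exact absurd ha hX₁
    · exact ⟨j, rfl⟩
    · exact absurd haj hX₁
  have hF4sub : F4 f T s ⊆ AT0 f T s := by
    rintro W ⟨i, b, j, hb, hib, hbj, hibj, rfl⟩
    refine ⟨by simp, hibj, ?_⟩
    intro Z₁ X₁ Z₂ hne hEq hX₁
    rcases fac3 hEq.symm hne with rfl | rfl | rfl | rfl | rfl | rfl
    · exact ⟨i, rfl⟩
    · rcases hb with hb | ⟨k, rfl⟩
      · exact absurd hb hX₁
      · exact ⟨k, rfl⟩
    · exact ⟨j, rfl⟩
    · exact absurd hib hX₁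
    · exact absurd hbj hX₁
    · exact absurd hibj hX₁
  have hsub0 : ∀ i : ℕ, ATn f T s (i + 1) ⊆ AT0 f T s := by
    intro i
    cases i with
    | zero =>
        intro W hW
        have hW' : W ∈ F1 f T ∪ F2 f T s ∪ F3 f T s ∪ F4 f T s := hW
        rcases hW' with ((h | h) | h) | h
        exacts [hF1sub h, hF2sub h, hF3sub h, hF4sub h]
    | succ j =>
        intro W hW
        have hW' : W ∈
            (⋃ a ∈ A1 f T, ({W | ∃ V ∈ ATn f T s (j + 1), W = a :: V} ∩ AT0 f T s)) ∪
            (⋃ X ∈ F2 f T s, ({W | ∃ V ∈ ATn f T s (j + 1), W = X ++ V} ∩ AT0 f T s)) := hW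
        rcases hW' with h | h <;>
        · simp only [Set.mem_iUnion] at h
          obtain ⟨x, hx, -, hW0⟩ := h
          exact hW0
  -- strong induction: A(T)(0) ⊆ A(T)
  have hmain : ∀ m : ℕ, ∀ W : List α, W.length ≤ m → W ∈ AT0 f T s →
      ∃ i : ℕ, W ∈ ATn f T s (i + 1) := by
    intro m
    induction m with
    | zero =>
        intro W hlen hW
        exact absurd (List.length_eq_zero_iff.mp (Nat.le_zero.mp hlen)) hW.1
    | succ m ih =>
        intro W hlen hW
        obtain ⟨hWne, hfWT, hfac⟩ := hW
        rcases W with _ | ⟨a, _ | ⟨b, rest⟩⟩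
        · exact absurd rfl hWne
        · -- W = [a]
          refine ⟨0, ?_⟩
          show [a] ∈ F1 f T ∪ F2 f T s ∪ F3 f T s ∪ F4 f T s
          exact Or.inl (Or.inl (Or.inl ⟨a, hfWT, rfl⟩))
        rcases rest with _ | ⟨c, rest⟩
        · -- W = [a, b]
          by_cases ha : f [a] ∈ T
          · by_cases hb : f [b] ∈ T
            · refine ⟨1, ?_⟩
              show [a, b] ∈
                (⋃ x ∈ A1 f T, ({W | ∃ V ∈ ATn f T s 1, W = x :: V} ∩ AT0 f T s)) ∪
                (⋃ X ∈ F2 f T s, ({W | ∃ V ∈ ATn f T s 1, W = X ++ V} ∩ AT0 f T s))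
              refine Or.inl ?_
              simp only [Set.mem_iUnion]
              refine ⟨a, ha, ⟨[b], ?_, rfl⟩, hWne, hfWT, hfac⟩
              show [b] ∈ F1 f T ∪ F2 f T s ∪ F3 f T s ∪ F4 f T s
              exact Or.inl (Or.inl (Or.inl ⟨b, hb, rfl⟩))
            · obtain ⟨j, hj⟩ := hfac [a] [b] [] (by simp) rfl hb
              obtain rfl : b = s j := by simpa using hj
              refine ⟨0, ?_⟩
              show [a, s j] ∈ F1 f T ∪ F2 f T s ∪ F3 f T s ∪ F4 f T s
              exact Or.inl (Or.inr ⟨a, j, ha, hfWT, rfl⟩)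
          · obtain ⟨i, hi⟩ := hfac [] [a] [b] (by simp) rfl ha
            obtain rfl : a = s i := by simpa using hi
            refine ⟨0, ?_⟩
            show [s i, b] ∈ F1 f T ∪ F2 f T s ∪ F3 f T s ∪ F4 f T s
            by_cases hb : f [b] ∈ T
            · exact Or.inl (Or.inl (Or.inr ⟨i, b, Or.inl hb, hfWT, rfl⟩))
            · obtain ⟨j, hj⟩ := hfac [s i] [b] [] (by simp) rfl hb
              obtain rfl : b = s j := by simpa using hj
              exact Or.inl (Or.inl (Or.inr ⟨i, s j, Or.inr ⟨j, rfl⟩, hfWT, rfl⟩))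
        · -- W = a :: b :: c :: rest
          have hWAT0 : (a :: b :: c :: rest) ∈ AT0 f T s := ⟨hWne, hfWT, hfac⟩
          by_cases ha : f [a] ∈ T
          · -- recurse on W₁ = b :: c :: rest
            have hfW₁ : f (b :: c :: rest) ∈ T := by
              by_contra h
              obtain ⟨i, hi⟩ := hfac [a] (b :: c :: rest) [] (by simp) (by simp) h
              simp at hi
            have hW₁ : (b :: c :: rest) ∈ AT0 f T s := by
              refine ⟨by simp, hfW₁, ?_⟩
              intro Z₁ X₁ Z₂ h1 h2 h3
              exact hfac (a :: Z₁) X₁ Z₂ h1 (by rw [h2]; rfl) h3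
            obtain ⟨i, hi⟩ := ih (b :: c :: rest) (by
              simp only [List.length_cons] at hlen ⊢; omega) hW₁
            refine ⟨i + 1, ?_⟩
            show (a :: b :: c :: rest) ∈
              (⋃ x ∈ A1 f T, ({W | ∃ V ∈ ATn f T s (i + 1), W = x :: V} ∩ AT0 f T s)) ∪
              (⋃ X ∈ F2 f T s, ({W | ∃ V ∈ ATn f T s (i + 1), W = X ++ V} ∩ AT0 f T s))
            refine Or.inl ?_
            simp only [Set.mem_iUnion]
            exact ⟨a, ha, ⟨b :: c :: rest, hi, rfl⟩, hWAT0⟩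
          · obtain ⟨i, hi⟩ := hfac [] [a] (b :: c :: rest) (by simp) rfl ha
            obtain rfl : a = s i := by simpa using hi
            have hab : f [s i, b] ∈ T := by
              by_contra h
              obtain ⟨j, hj⟩ := hfac [] [s i, b] (c :: rest) (by simp) rfl h
              simp at hj
            have hb' : f [b] ∈ T ∨ ∃ j, b = s j := by
              by_cases hb : f [b] ∈ T
              · exact Or.inl hb
              · obtain ⟨j, hj⟩ := hfac [s i] [b] (c :: rest) (by simp) rfl hb
                exact Or.inr ⟨j, by simpa using hj⟩
            by_cases hr : f (c :: rest) ∈ T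
            · have hrest : (c :: rest) ∈ AT0 f T s := by
                refine ⟨by simp, hr, ?_⟩
                intro Z₁ X₁ Z₂ h1 h2 h3
                exact hfac (s i :: b :: Z₁) X₁ Z₂ h1 (by rw [h2]; rfl) h3
              obtain ⟨j, hj⟩ := ih (c :: rest)
                (by simp only [List.length_cons] at hlen ⊢; omega) hrest
              refine ⟨j + 1, ?_⟩
              show (s i :: b :: c :: rest) ∈
                (⋃ x ∈ A1 f T, ({W | ∃ V ∈ ATn f T s (j + 1), W = x :: V} ∩ AT0 f T s)) ∪
                (⋃ X ∈ F2 f T s, ({W | ∃ V ∈ ATn f T s (j + 1), W = X ++ V} ∩ AT0 f T s))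
              refine Or.inr ?_
              simp only [Set.mem_iUnion]
              exact ⟨[s i, b], ⟨i, b, hb', hab, rfl⟩, ⟨c :: rest, hj, rfl⟩, hWAT0⟩
            · obtain ⟨k, hk⟩ := hfac [s i, b] (c :: rest) [] (by simp) (by simp) hr
              obtain ⟨rfl, rfl⟩ : c = s k ∧ rest = [] := by simpa using hk
              have hbk : f [b, s k] ∈ T := by
                by_contra h
                obtain ⟨j, hj⟩ := hfac [s i] [b, s k] [] (by simp) rfl h
                simp at hj
              refine ⟨0, ?_⟩
              show [s i, b, s k] ∈ F1 f T ∪ F2 f T s ∪ F3 f T s ∪ F4 f T s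
              exact Or.inr ⟨i, b, k, hb', hab, hbk, hfWT, rfl⟩
  have hAT0sub : AT0 f T s ⊆ ATset f T s := by
    intro W hW
    obtain ⟨i, hi⟩ := hmain W.length W le_rfl hW
    exact Set.mem_iUnion.mpr ⟨i, hi⟩
  have haeq : ATset f T s = AT0 f T s := by
    apply Set.Subset.antisymm _ hAT0sub
    intro W hW
    obtain ⟨i, hi⟩ := Set.mem_iUnion.mp hW
    exact hsub0 i hi
  refine ⟨haeq, ?_, ?_⟩
  · intro W hWirr hWT
    rw [haeq]
    exact hbcore W hWirr hWT
  · intro X Y hXY hfX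
    have hXne : X ≠ [] := (hRWS _ hXY).1
    have hYne : Y ≠ [] := (hRWS _ hXY).2
    have hfXY : f X = f Y := by
      refine (hker X Y hXne hYne).mpr (Relation.EqvGen.rel _ _ ?_)
      exact ⟨[], [], X, Y, hXY, by simp, by simp⟩
    constructor
    · -- X ∈ A(T)
      rw [haeq]
      refine ⟨hXne, hfX, ?_⟩
      intro Z₁ X₁ Z₂ hne hEq hX₁
      by_cases htriv : Z₁ = [] ∧ Z₂ = []
      · obtain ⟨rfl, rfl⟩ := htriv
        simp only [List.append_nil, List.nil_append] at hEq
        exact absurd (hEq ▸ hfX) hX₁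
      · have hL := congrArg List.length hEq
        simp only [List.length_append] at hL
        have hlt : X₁.length < X.length := by
          have hz : Z₁.length ≠ 0 ∨ Z₂.length ≠ 0 := by
            rcases not_and_or.mp htriv with h | h
            · exact Or.inl (fun hz => h (List.length_eq_zero_iff.mp hz))
            · exact Or.inr (fun hz => h (List.length_eq_zero_iff.mp hz))
          rcases hz with h | h <;> omega
        have hirrX₁ : Irr R X₁ := by
          refine ⟨hne, ?_⟩
          rintro ⟨Y₁, X', Y₂, ⟨Y', hr⟩, hx⟩
          have hne' : (X', Y') ≠ (X, Y) := by
            intro h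
            rw [Prod.mk.injEq] at h
            obtain ⟨rfl, rfl⟩ := h
            have h1 := congrArg List.length hx
            simp only [List.length_append] at h1
            omega
          refine hQ3 X Y hXY ⟨(Z₁ ++ Y₁) ++ Y' ++ (Y₂ ++ Z₂), Z₁ ++ Y₁, Y₂ ++ Z₂, X', Y',
            ⟨hr, hne'⟩, ?_, rfl⟩
          subst hx; subst hEq; simp
        obtain ⟨i, hi⟩ := hnotT _ hX₁
        exact ⟨i, hirruniq X₁ [s i] hne (by simp) hirrX₁ (hQ1irr i) hi⟩
    · rw [haeq]
      exact hbcore Y (hQ2 X Y hXY) (hfXY ▸ hfX)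
end
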